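/- arXiv:2303.08171 — 2 statements merged into one kernel-verified Lean document; each statement's English description precedes it below -/
import Mathlib

section
/- Suppose a sequence x : ℕ → ℝ^{m_T} satisfies x(t+1) = Ŵ(t) x(t) + Δr(t) where each Ŵ(t) is doubly stochastic, and r : ℕ → ℝ^{m_T} with Δr(t) = r(t) − r(t−1) for t ≥ 1. Define e(t) = (1/m_T) Σ_i x_i(t) − (1/m_T) Σ_i r_i(t−1). Then e(t) = e(1) for all t ≥ 1. -/
theorem stmt2 {m : ℕ} (hm : 1 ≤ m)
    (W : ℕ → Matrix (Fin m) (Fin m) ℝ)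
    (hnn : ∀ t i j, 0 ≤ W t i j)
    (hrow : ∀ t i, ∑ j, W t i j = 1)
    (hcol : ∀ t j, ∑ i, W t i j = 1)
    (x r : ℕ → Fin m → ℝ)
    (hup : ∀ t, 1 ≤ t → ∀ i,
      x (t + 1) i = (∑ j, W t i j * x t j) + (r t i - r (t - 1) i))
    (e : ℕ → ℝ)
    (he : ∀ t, e t = (1 / (m : ℝ)) * (∑ i, x t i) - (1 / (m : ℝ)) * (∑ i, r (t - 1) i)) :
    ∀ t, 1 ≤ t → e t = e 1 := by
  intro t ht
  induction t with
  | zero => omega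
  | succ n ih =>
    rcases Nat.eq_or_lt_of_le ht with h | h
    · rw [← h]
    · have hn : 1 ≤ n := by omega
      rw [← ih hn, he (n+1), he n]
      have hsum : ∑ i, x (n+1) i = (∑ i, x n i) + ((∑ i, r n i) - ∑ i, r (n-1) i) := by
        calc ∑ i, x (n+1) i
            = ∑ i, ((∑ j, W n i j * x n j) + (r n i - r (n-1) i)) := by
              exact Finset.sum_congr rfl fun i _ => hup n hn i
          _ = (∑ i, ∑ j, W n i j * x n j) + ((∑ i, r n i) - ∑ i, r (n-1) i) := by
              rw [Finset.sum_add_distrib, Finset.sum_sub_distrib]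
          _ = (∑ j, (∑ i, W n i j) * x n j) + ((∑ i, r n i) - ∑ i, r (n-1) i) := by
              rw [Finset.sum_comm]
              simp [Finset.sum_mul]
          _ = _ := by simp [hcol]
      rw [hsum]
      have : (n + 1) - 1 = n := by omega
      rw [this]
      ring
end

section
/- Let y : ℕ → ℝ be nonnegative, η ∈ (0,1), θ ≥ 0, and T ≥ 1 a natural number. Suppose y(t+T) ≤ (1−η) y(t) + Tθ for all t ≥ 1 and y(t+1) ≤ y(t) + θ for all t ≥ 1. Then limsup_{t→∞} y(t) ≤ Tθ(1 + 1/η). -/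
theorem stmt6 (y : ℕ → ℝ) (hy : ∀ t, 0 ≤ y t)
    (η θ : ℝ) (hη : η ∈ Set.Ioo (0 : ℝ) 1) (hθ : 0 ≤ θ)
    (T : ℕ) (hT : 1 ≤ T)
    (hcontr : ∀ t, 1 ≤ t → y (t + T) ≤ (1 - η) * y t + (T : ℝ) * θ)
    (hstep : ∀ t, 1 ≤ t → y (t + 1) ≤ y t + θ) :
    Filter.limsup y Filter.atTop ≤ (T : ℝ) * θ * (1 + 1 / η) := by
  obtain ⟨hη0, hη1⟩ := hη
  have h1mη0 : (0:ℝ) ≤ 1 - η := by linarith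
  have h1mη1 : (1:ℝ) - η < 1 := by linarith
  have hTθ : 0 ≤ (T:ℝ) * θ := by positivity
  -- step bound: y (t+n) ≤ y t + n*θ for t ≥ 1
  have hsteps : ∀ t, 1 ≤ t → ∀ n : ℕ, y (t + n) ≤ y t + (n:ℝ) * θ := by
    intro t ht n
    induction n with
    | zero => simp
    | succ n ih =>
      have h := hstep (t + n) (le_trans ht (Nat.le_add_right _ _))
      have : y (t + (n+1)) ≤ y (t + n) + θ := by
        have : t + (n+1) = (t + n) + 1 := by ring
        rw [this]; exact h
      push_cast
      calc y (t + (n+1)) ≤ y (t + n) + θ := this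
        _ ≤ y t + (n:ℝ) * θ + θ := by linarith
        _ = y t + ((n:ℝ) + 1) * θ := by ring
  -- contraction along subsequence
  have hkey : (1 - η) * ((T:ℝ) * θ / η) + (T:ℝ) * θ = (T:ℝ) * θ / η := by
    field_simp; ring
  have hgeo : ∀ k : ℕ, y (1 + k * T) ≤ (1 - η)^k * y 1 + (T:ℝ) * θ / η := by
    intro k
    induction k with
    | zero =>
      simp only [Nat.zero_mul, Nat.add_zero, pow_zero, one_mul]
      have : 0 ≤ (T:ℝ) * θ / η := by positivity
      linarith
    | succ k ih =>
      have h1 : y (1 + k * T + T) ≤ (1 - η) * y (1 + k * T) + (T:ℝ) * θ :=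
        hcontr _ (Nat.le_add_right 1 _)
      have heq : 1 + (k+1) * T = 1 + k * T + T := by ring
      have h2 : (1 - η) * y (1 + k * T) ≤ (1 - η) * ((1 - η)^k * y 1 + (T:ℝ) * θ / η) :=
        mul_le_mul_of_nonneg_left ih h1mη0
      rw [heq]
      calc y (1 + k * T + T) ≤ (1 - η) * y (1 + k * T) + (T:ℝ) * θ := h1
        _ ≤ (1 - η) * ((1 - η)^k * y 1 + (T:ℝ) * θ / η) + (T:ℝ) * θ := by linarith
        _ = (1 - η)^(k+1) * y 1 + ((1 - η) * ((T:ℝ) * θ / η) + (T:ℝ) * θ) := by ring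
        _ = (1 - η)^(k+1) * y 1 + (T:ℝ) * θ / η := by rw [hkey]
  -- coboundedness from below (y ≥ 0)
  have hcobdd : Filter.IsCoboundedUnder (· ≤ ·) Filter.atTop y :=
    Filter.isCoboundedUnder_le_of_eventually_le Filter.atTop
      (Filter.Eventually.of_forall fun t => hy t)
  refine le_of_forall_pos_le_add ?_
  intro ε hε
  apply Filter.limsup_le_of_le hcobdd
  -- find K with (1-η)^K * y 1 ≤ ε
  have htend : Filter.Tendsto (fun k : ℕ => (1 - η)^k * y 1) Filter.atTop (nhds 0) := by
    have h := tendsto_pow_atTop_nhds_zero_of_lt_one h1mη0 h1mη1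
    simpa using h.mul_const (y 1)
  have hev : ∀ᶠ k in Filter.atTop, (1 - η)^k * y 1 ≤ ε := by
    filter_upwards [htend.eventually (gt_mem_nhds hε)] with k hk using le_of_lt hk
  obtain ⟨K, hK⟩ := Filter.eventually_atTop.mp hev
  rw [Filter.eventually_atTop]
  refine ⟨1 + K * T, fun t ht => ?_⟩
  have ht1 : 1 ≤ t := le_trans (Nat.le_add_right 1 _) ht
  set k := (t - 1) / T with hkdef
  set r := (t - 1) % T with hrdef
  have hrT : r < T := Nat.mod_lt _ (by omega)
  have hteq : t = 1 + k * T + r := by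
    have h := Nat.div_add_mod (t - 1) T
    rw [← hkdef, ← hrdef] at h
    have hc : T * k = k * T := Nat.mul_comm _ _
    omega
  have hkK : K ≤ k := by
    rw [hkdef, Nat.le_div_iff_mul_le (by omega : 0 < T)]
    omega
  have hbound1 : y t ≤ y (1 + k * T) + (r:ℝ) * θ := by
    rw [hteq]
    exact hsteps (1 + k * T) (Nat.le_add_right 1 _) r
  have hbound2 : (r:ℝ) * θ ≤ (T:ℝ) * θ :=
    mul_le_mul_of_nonneg_right (by exact_mod_cast hrT.le) hθ
  have hbound3 : (1 - η)^k * y 1 ≤ ε := hK k hkK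
  have hfin : (T:ℝ) * θ * (1 + 1/η) = (T:ℝ) * θ + (T:ℝ) * θ / η := by ring
  have := hgeo k
  linarith
end
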